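/- Let f : W → ℝᵐ be C^∞ on an open neighborhood W of the origin in ℂ^{n+1}, and let F be a diffeomorphism of order (β, p) with β > 1 and p ≥ 1 defined on some V(a,b,r₁,r₂,n). Then f ∘ F − f is of order (β, p). -/

import Mathlib

open Set Metric

/-- The sector-product domain `V(a,b,r₁,r₂,n) ⊆ ℂ* × ℂⁿ` (no restriction on the argument
when `a = −π` and `b = π`). -/
def Sector (a b r₁ r₂ : ℝ) (n : ℕ) : Set (ℂ × (Fin n → ℂ)) :=
  {z | z.1 ≠ 0 ∧ ‖z.1‖ < r₁ ∧ ‖z.2‖ < r₂ ∧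
    ((a = -Real.pi ∧ b = Real.pi) ∨ (a < z.1.arg ∧ z.1.arg < b))}

/-- `f : V → F` is of order `(α, p)` at the origin: for every `k ≤ p`, the `k`-th order
derivative `g` of `f` (taken within `V`) satisfies that `|x|^{k−α} ‖g(x,y)‖` is bounded
near the origin of `ℂ^{n+1}`. -/
def IsOrderOn {n : ℕ} {F : Type*} [NormedAddCommGroup F] [NormedSpace ℝ F]
    (V : Set (ℂ × (Fin n → ℂ))) (f : ℂ × (Fin n → ℂ) → F) (α : ℝ) (p : ℕ) : Prop :=
  ∀ k ≤ p, ∃ C ε : ℝ, 0 < ε ∧ ∀ z ∈ V, ‖z‖ < ε →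
    ‖z.1‖ ^ ((k : ℝ) - α) * ‖iteratedFDerivWithin ℝ k f V z‖ ≤ C


/-- `F` is a diffeomorphism of order `(β, p)` on `V`: it is a smooth diffeomorphism onto its
image, preserves the `x`-coordinate (`x ∘ F ≡ x`), and `F − id` is of order `(β, p)`. -/
def IsDiffeoOrder {n : ℕ} (V : Set (ℂ × (Fin n → ℂ)))
    (F : ℂ × (Fin n → ℂ) → ℂ × (Fin n → ℂ)) (β : ℝ) (p : ℕ) : Prop :=
  ContDiffOn ℝ (⊤ : ℕ∞) F V ∧ Set.InjOn F V ∧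
  (∀ z ∈ V, (F z).1 = z.1) ∧
  IsOrderOn V (fun z => F z - z) β p

lemma sector_isOpen (a b r₁ r₂ : ℝ) (n : ℕ) (hb : b ≤ Real.pi) :
    IsOpen (Sector a b r₁ r₂ n) := by
  by_cases hfull : a = -Real.pi ∧ b = Real.pi
  · have : Sector a b r₁ r₂ n = {z | z.1 ≠ 0 ∧ ‖z.1‖ < r₁ ∧ ‖z.2‖ < r₂} := by
      ext z; simp only [Sector, mem_setOf_eq, hfull.1, hfull.2, and_self, true_or,
        and_true]
    rw [this]
    have h1 : IsOpen {z : ℂ × (Fin n → ℂ) | z.1 ≠ 0} :=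
      isOpen_ne_fun (by fun_prop) continuous_const
    have h2 : IsOpen {z : ℂ × (Fin n → ℂ) | ‖z.1‖ < r₁} :=
      isOpen_lt (by fun_prop) continuous_const
    have h3 : IsOpen {z : ℂ × (Fin n → ℂ) | ‖z.2‖ < r₂} :=
      isOpen_lt (by fun_prop) continuous_const
    have : {z : ℂ × (Fin n → ℂ) | z.1 ≠ 0 ∧ ‖z.1‖ < r₁ ∧ ‖z.2‖ < r₂}
        = {z : ℂ × (Fin n → ℂ) | z.1 ≠ 0} ∩ ({z | ‖z.1‖ < r₁} ∩ {z | ‖z.2‖ < r₂}) := by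
      ext z; simp [and_assoc]
    rw [this]; exact h1.inter (h2.inter h3)
  · have : Sector a b r₁ r₂ n =
        {z | z.1 ≠ 0 ∧ ‖z.1‖ < r₁ ∧ ‖z.2‖ < r₂ ∧ a < z.1.arg ∧ z.1.arg < b} := by
      ext z; simp only [Sector, mem_setOf_eq]; tauto
    rw [this]
    rw [isOpen_iff_mem_nhds]
    rintro z ⟨hz0, hz1, hz2, hza, hzb⟩
    have hslit : z.1 ∈ Complex.slitPlane := by
      rw [Complex.mem_slitPlane_iff]
      by_contra hc
      push_neg at hc
      have hre : z.1.re ≤ 0 := hc.1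
      have hrene : z.1.re ≠ 0 := fun h => hz0 (Complex.ext h hc.2)
      have : z.1.arg = Real.pi := Complex.arg_eq_pi_iff.mpr ⟨lt_of_le_of_ne hre hrene, hc.2⟩
      linarith [lt_of_lt_of_le hzb hb]
    have hc : ContinuousAt (fun z : ℂ × (Fin n → ℂ) => z.1.arg) z :=
      (Complex.continuousAt_arg hslit).comp continuousAt_fst
    have h1 : {z : ℂ × (Fin n → ℂ) | z.1 ≠ 0} ∈ nhds z :=
      (isOpen_ne_fun (by fun_prop) continuous_const).mem_nhds hz0
    have h2 : {z : ℂ × (Fin n → ℂ) | ‖z.1‖ < r₁} ∈ nhds z :=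
      (isOpen_lt (by fun_prop) continuous_const).mem_nhds hz1
    have h3 : {z : ℂ × (Fin n → ℂ) | ‖z.2‖ < r₂} ∈ nhds z :=
      (isOpen_lt (by fun_prop) continuous_const).mem_nhds hz2
    have h4 : {w : ℂ × (Fin n → ℂ) | a < w.1.arg ∧ w.1.arg < b} ∈ nhds z := by
      have := hc (Ioo_mem_nhds hza hzb)
      filter_upwards [this] with w hw
      exact hw
    filter_upwards [h1, h2, h3, h4] with w w1 w2 w3 w4
    exact ⟨w1, w2, w3, w4.1, w4.2⟩

lemma derivBounds {E G : Type*} [NormedAddCommGroup E] [NormedSpace ℝ E]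
    [NormedAddCommGroup G] [NormedSpace ℝ G] {W : Set E} (hWo : IsOpen W)
    {g : E → G} (hg : ContDiffOn ℝ (⊤ : ℕ∞) g W) {K : Set E} (hK : IsCompact K)
    (hKW : K ⊆ W) (J : ℕ) :
    ∃ M : ℝ, 0 ≤ M ∧ ∀ j ≤ J, ∀ x ∈ K, ‖iteratedFDeriv ℝ j g x‖ ≤ M := by
  have single : ∀ j : ℕ, ∃ M : ℝ, ∀ x ∈ K, ‖iteratedFDeriv ℝ j g x‖ ≤ M := by
    intro j
    have hco : ContinuousOn (iteratedFDeriv ℝ j g) W := by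
      have := hg.continuousOn_iteratedFDerivWithin (m := j) (by exact_mod_cast le_top) hWo.uniqueDiffOn
      exact this.congr (iteratedFDerivWithin_of_isOpen j hWo).symm
    exact hK.exists_bound_of_continuousOn (hco.mono hKW)
  induction J with
  | zero =>
    obtain ⟨M, hM⟩ := single 0
    refine ⟨max M 0, le_max_right _ _, ?_⟩
    intro j hj x hx
    interval_cases j
    exact (hM x hx).trans (le_max_left _ _)
  | succ J ih =>
    obtain ⟨M, hM0, hM⟩ := ih
    obtain ⟨M', hM'⟩ := single (J+1)
    refine ⟨max M (max M' 0), le_trans hM0 (le_max_left _ _), ?_⟩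
    intro j hj x hx
    rcases Nat.lt_succ_iff_lt_or_eq.mp (Nat.lt_succ_of_le hj) with h | h
    · exact (hM j (Nat.lt_succ_iff.mp h) x hx).trans (le_max_left _ _)
    · subst h
      exact (hM' x hx).trans ((le_max_left _ _).trans (le_max_right _ _))

set_option maxSynthPendingDepth 2 in
set_option maxHeartbeats 1000000 in
lemma key {E : Type} [NormedAddCommGroup E] [NormedSpace ℝ E] [ProperSpace E]
    (β : ℝ) (hβ : 1 ≤ β) (p : ℕ) (s W : Set E) (hs : IsOpen s) (hWo : IsOpen W)
    (ρ : E → ℝ) (hρ : ∀ z ∈ s, 0 < ρ z ∧ ρ z ≤ 1)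
    (F : E → E) (hFs : ContDiffOn ℝ (⊤ : ℕ∞) F s)
    (δ CF : ℝ) (hδ : 0 < δ) (hCF : 0 ≤ CF)
    (hK : closedBall (0:E) (2*δ) ⊆ W)
    (hmem : ∀ z ∈ s, ‖z‖ < δ ∧ ‖F z‖ < δ)
    (hFd : ∀ k, k ≤ p → ∀ z ∈ s,
      ‖iteratedFDeriv ℝ k (fun w => F w - w) z‖ ≤ CF * ρ z ^ (β - (k : ℝ))) :
    ∀ q, q ≤ p → ∀ (G : Type) [NormedAddCommGroup G] [NormedSpace ℝ G], ∀ g : E → G,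
      ContDiffOn ℝ (⊤ : ℕ∞) g W → ∃ C : ℝ, 0 ≤ C ∧ ∀ k ≤ q, ∀ z ∈ s,
        ‖iteratedFDeriv ℝ k (fun w => g (F w) - g w) z‖ ≤ C * ρ z ^ (β - (k : ℝ)) := by
  have hsW : s ⊆ W := fun z hz =>
    hK (by simpa [mem_closedBall_zero_iff] using ((hmem z hz).1.le.trans (by linarith)))
  have hFW : ∀ z ∈ s, F z ∈ W := fun z hz =>
    hK (by simpa [mem_closedBall_zero_iff] using ((hmem z hz).2.le.trans (by linarith)))
  have hmapsTo : MapsTo F s W := fun z hz => hFW z hz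
  have hFz : ∀ z ∈ s, ‖F z - z‖ ≤ CF * ρ z ^ β := by
    intro z hz
    have := hFd 0 (Nat.zero_le _) z hz
    simpa [norm_iteratedFDeriv_zero] using this
  intro q
  induction q with
  | zero =>
    intro _ G _ _ g hg
    obtain ⟨M, hM0, hM⟩ := derivBounds hWo hg (isCompact_closedBall (0:E) (2*δ)) hK 1
    refine ⟨M * CF, by positivity, ?_⟩
    intro k hk z hz
    interval_cases k
    have hdiff : ∀ x ∈ ball (0:E) (2*δ), DifferentiableAt ℝ g x := by
      intro x hx
      have hxW : x ∈ W := hK (ball_subset_closedBall hx)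
      exact ((hg.contDiffAt (hWo.mem_nhds hxW)).differentiableAt (by simp))
    have hbd : ∀ x ∈ ball (0:E) (2*δ), ‖fderiv ℝ g x‖ ≤ M := by
      intro x hx
      have h1 : ‖fderiv ℝ g x‖ = ‖iteratedFDeriv ℝ 1 g x‖ := by
        rw [← norm_iteratedFDeriv_fderiv, norm_iteratedFDeriv_zero]
      rw [h1]
      exact hM 1 le_rfl x (ball_subset_closedBall hx)
    have hzball : z ∈ ball (0:E) (2*δ) := by
      rw [mem_ball_zero_iff]; linarith [(hmem z hz).1]
    have hFzball : F z ∈ ball (0:E) (2*δ) := by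
      rw [mem_ball_zero_iff]; linarith [(hmem z hz).2]
    have mvt := (convex_ball (0:E) (2*δ)).norm_image_sub_le_of_norm_fderiv_le hdiff hbd
      hzball hFzball
    calc ‖iteratedFDeriv ℝ 0 (fun w => g (F w) - g w) z‖
        = ‖g (F z) - g z‖ := by rw [norm_iteratedFDeriv_zero]
      _ ≤ M * ‖F z - z‖ := mvt
      _ ≤ M * (CF * ρ z ^ β) := mul_le_mul_of_nonneg_left (hFz z hz) hM0
      _ = M * CF * ρ z ^ (β - ((0:ℕ) : ℝ)) := by push_cast; ring_nf
  | succ q ih =>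
    intro hq G _ _ g hg
    have hqp : q ≤ p := Nat.le_of_succ_le hq
    obtain ⟨C₁, hC₁0, hC₁⟩ := ih hqp G g hg
    set g₁ : E → (E →L[ℝ] G) := fderiv ℝ g with hg₁def
    have hg₁ : ContDiffOn ℝ (⊤ : ℕ∞) g₁ W := hg.fderiv_of_isOpen hWo (by simp)
    obtain ⟨C₂, hC₂0, hC₂⟩ := ih hqp (E →L[ℝ] G) g₁ hg₁
    obtain ⟨Mg, hMg0, hMg⟩ := derivBounds hWo hg (isCompact_closedBall (0:E) (2*δ)) hK (q+1)
    set Fs : E → E := fun w => F w - w with hFsdef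
    set u : E → (E →L[ℝ] G) := fun w => g₁ (F w) - g₁ w with hudef
    set v : E → (E →L[ℝ] E) := fun w => fderiv ℝ Fs w with hvdef
    have hFs' : ContDiffOn ℝ (⊤ : ℕ∞) Fs s := hFs.sub contDiffOn_id
    have hv : ContDiffOn ℝ (⊤ : ℕ∞) v s := by
      have : ContDiffOn ℝ (⊤ : ℕ∞) v s := hFs'.fderiv_of_isOpen hs (by simp)
      exact this
    have hu : ContDiffOn ℝ (⊤ : ℕ∞) u s := (hg₁.comp hFs hmapsTo).sub (hg₁.mono hsW)
    have hg₁s : ContDiffOn ℝ (⊤ : ℕ∞) g₁ s := hg₁.mono hsW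
    -- pointwise bounds
    have hub : ∀ i ≤ q, ∀ z ∈ s, ‖iteratedFDerivWithin ℝ i u s z‖ ≤ C₂ * ρ z ^ (β - (i:ℝ)) := by
      intro i hi z hz
      rw [iteratedFDerivWithin_of_isOpen i hs hz]
      exact hC₂ i hi z hz
    have hvb : ∀ j, j ≤ q → ∀ z ∈ s,
        ‖iteratedFDerivWithin ℝ j v s z‖ ≤ CF * ρ z ^ (β - 1 - (j:ℝ)) := by
      intro j hj z hz
      rw [iteratedFDerivWithin_of_isOpen j hs hz]
      have h1 : ‖iteratedFDeriv ℝ j v z‖ = ‖iteratedFDeriv ℝ (j+1) Fs z‖ :=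
        norm_iteratedFDeriv_fderiv
      rw [h1]
      have := hFd (j+1) (by omega) z hz
      convert this using 2
      push_cast; ring
    have hg₁b : ∀ i ≤ q, ∀ z ∈ s, ‖iteratedFDerivWithin ℝ i g₁ s z‖ ≤ Mg := by
      intro i hi z hz
      rw [iteratedFDerivWithin_of_isOpen i hs hz]
      have h1 : ‖iteratedFDeriv ℝ i g₁ z‖ = ‖iteratedFDeriv ℝ (i+1) g z‖ :=
        norm_iteratedFDeriv_fderiv
      rw [h1]
      exact hMg (i+1) (by omega) z (by
        simp only [mem_closedBall_zero_iff]; linarith [(hmem z hz).1])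
    -- the key identity for the derivative
    set B : (E →L[ℝ] G) →L[ℝ] (E →L[ℝ] E) →L[ℝ] (E →L[ℝ] G) :=
      ContinuousLinearMap.compL ℝ E E G with hBdef
    have hEq : EqOn (fderiv ℝ (fun w => g (F w) - g w))
        (fun w => u w + (B (u w) (v w) + B (g₁ w) (v w))) s := by
      intro w hw
      have hFw : DifferentiableAt ℝ F w :=
        (hFs.contDiffAt (hs.mem_nhds hw)).differentiableAt (by simp)
      have hgFw : DifferentiableAt ℝ g (F w) :=
        (hg.contDiffAt (hWo.mem_nhds (hFW w hw))).differentiableAt (by simp)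
      have hgw : DifferentiableAt ℝ g w :=
        (hg.contDiffAt (hWo.mem_nhds (hsW hw))).differentiableAt (by simp)
      have hcompd : DifferentiableAt ℝ (fun w => g (F w)) w := hgFw.comp w hFw
      have h1 : fderiv ℝ (fun w => g (F w) - g w) w
          = fderiv ℝ (fun w => g (F w)) w - fderiv ℝ g w := fderiv_sub hcompd hgw
      have h2 : fderiv ℝ (fun w => g (F w)) w = (g₁ (F w)).comp (fderiv ℝ F w) :=
        fderiv_comp w hgFw hFw
      have h3 : v w = fderiv ℝ F w - ContinuousLinearMap.id ℝ E := by
        have h4 : fderiv ℝ Fs w = fderiv ℝ F w - fderiv ℝ (fun x : E => x) w :=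
          fderiv_sub hFw differentiableAt_fun_id
        simp only [hvdef]
        rw [h4, fderiv_id']
      simp only [h1, h2, h3, hudef, hg₁def, hBdef, ContinuousLinearMap.compL_apply,
        ContinuousLinearMap.sub_comp, ContinuousLinearMap.comp_sub,
        ContinuousLinearMap.comp_id]
      abel
    -- the estimate at order q+1
    have hmain : ∀ z ∈ s, ‖iteratedFDeriv ℝ (q+1) (fun w => g (F w) - g w) z‖ ≤
        (C₂ + 2^q * (C₂ * CF) + 2^q * (Mg * CF)) * ρ z ^ (β - ((q+1:ℕ) : ℝ)) := by
      intro z hz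
      obtain ⟨hr0, hr1⟩ := hρ z hz
      set r := ρ z with hrdef
      have hmono : ∀ {x y : ℝ}, x ≤ y → r ^ y ≤ r ^ x := fun h =>
        Real.rpow_le_rpow_of_exponent_ge hr0 hr1 h
      set e : ℝ := β - ((q+1:ℕ) : ℝ) with hedef
      have he : e = β - (q:ℝ) - 1 := by rw [hedef]; push_cast; ring
      have hre0 : 0 ≤ r ^ e := (Real.rpow_pos_of_pos hr0 e).le
      have hTu : ContDiffOn ℝ (q : WithTop ℕ∞) u s := hu.of_le (by exact_mod_cast le_top)
      have hT1 : ContDiffOn ℝ (q : WithTop ℕ∞) (fun w => B (u w) (v w)) s :=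
        ((hu.clm_comp hv).of_le (by exact_mod_cast le_top) : ContDiffOn ℝ (q : WithTop ℕ∞) _ s)
      have hT2 : ContDiffOn ℝ (q : WithTop ℕ∞) (fun w => B (g₁ w) (v w)) s :=
        ((hg₁s.clm_comp hv).of_le (by exact_mod_cast le_top) : ContDiffOn ℝ (q : WithTop ℕ∞) _ s)
      have step1 : ‖iteratedFDeriv ℝ (q+1) (fun w => g (F w) - g w) z‖
          = ‖iteratedFDerivWithin ℝ q
              (fun w => u w + (B (u w) (v w) + B (g₁ w) (v w))) s z‖ := by
        rw [← norm_iteratedFDeriv_fderiv, ← iteratedFDerivWithin_of_isOpen q hs hz,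
          iteratedFDerivWithin_congr hEq hz q]
      rw [step1, iteratedFDerivWithin_add_apply' (hTu z hz) ((hT1.add hT2) z hz) hs.uniqueDiffOn hz,
        iteratedFDerivWithin_add_apply' (hT1 z hz) (hT2 z hz) hs.uniqueDiffOn hz]
      have bound0 : ‖iteratedFDerivWithin ℝ q u s z‖ ≤ C₂ * r ^ e := by
        refine (hub q le_rfl z hz).trans ?_
        refine mul_le_mul_of_nonneg_left ?_ hC₂0
        exact hmono (by rw [he]; push_cast; linarith)
      have bound1 : ‖iteratedFDerivWithin ℝ q (fun w => B (u w) (v w)) s z‖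
          ≤ 2^q * (C₂ * CF) * r ^ e := by
        have hB := B.norm_iteratedFDerivWithin_le_of_bilinear hu hv hs.uniqueDiffOn hz
          (n := q) (by exact_mod_cast le_top)
        refine hB.trans ?_
        have hsum : ∑ i ∈ Finset.range (q + 1), (q.choose i : ℝ) *
              ‖iteratedFDerivWithin ℝ i u s z‖ * ‖iteratedFDerivWithin ℝ (q - i) v s z‖
            ≤ ∑ i ∈ Finset.range (q + 1), (q.choose i : ℝ) * (C₂ * CF * r ^ e) := by
          refine Finset.sum_le_sum ?_
          intro i hi
          have hiq : i ≤ q := Finset.mem_range_succ_iff.mp hi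
          have b1 := hub i hiq z hz
          have b2 := hvb (q - i) (Nat.sub_le q i) z hz
          have hcast : (((q - i : ℕ)) : ℝ) = (q : ℝ) - (i : ℝ) := by
            rw [Nat.cast_sub hiq]
          rw [hcast] at b2
          calc (q.choose i : ℝ) * ‖iteratedFDerivWithin ℝ i u s z‖ *
                ‖iteratedFDerivWithin ℝ (q - i) v s z‖
              ≤ (q.choose i : ℝ) * (C₂ * r ^ (β - (i:ℝ))) *
                (CF * r ^ (β - 1 - ((q:ℝ) - (i:ℝ)))) := by
                gcongr
            _ = (q.choose i : ℝ) * (C₂ * CF *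
                (r ^ (β - (i:ℝ)) * r ^ (β - 1 - ((q:ℝ) - (i:ℝ))))) := by ring
            _ ≤ (q.choose i : ℝ) * (C₂ * CF * r ^ e) := by
                refine mul_le_mul_of_nonneg_left ?_ (by positivity)
                refine mul_le_mul_of_nonneg_left ?_ (by positivity)
                rw [← Real.rpow_add hr0]
                exact hmono (by rw [he]; linarith)
        have hS0 : (0:ℝ) ≤ ∑ i ∈ Finset.range (q + 1), (q.choose i : ℝ) *
              ‖iteratedFDerivWithin ℝ i u s z‖ * ‖iteratedFDerivWithin ℝ (q - i) v s z‖ :=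
          Finset.sum_nonneg fun i _ => by positivity
        have hBn : ‖B‖ ≤ 1 := ContinuousLinearMap.norm_compL_le ℝ E E G
        refine le_trans (mul_le_mul_of_nonneg_right hBn hS0) ?_
        rw [one_mul]
        refine hsum.trans ?_
        have hfin : ∑ i ∈ Finset.range (q+1), (q.choose i : ℝ) * (C₂ * CF * r ^ e)
            = (2^q : ℝ) * (C₂ * CF * r ^ e) := by
          rw [← Finset.sum_mul, ← Nat.cast_sum, Nat.sum_range_choose]
          push_cast; ring
        rw [hfin]
        exact le_of_eq (by ring)
      have bound2 : ‖iteratedFDerivWithin ℝ q (fun w => B (g₁ w) (v w)) s z‖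
          ≤ 2^q * (Mg * CF) * r ^ e := by
        have hB := B.norm_iteratedFDerivWithin_le_of_bilinear hg₁s hv hs.uniqueDiffOn hz
          (n := q) (by exact_mod_cast le_top)
        refine hB.trans ?_
        have hsum : ∑ i ∈ Finset.range (q + 1), (q.choose i : ℝ) *
              ‖iteratedFDerivWithin ℝ i g₁ s z‖ * ‖iteratedFDerivWithin ℝ (q - i) v s z‖
            ≤ ∑ i ∈ Finset.range (q + 1), (q.choose i : ℝ) * (Mg * CF * r ^ e) := by
          refine Finset.sum_le_sum ?_
          intro i hi
          have hiq : i ≤ q := Finset.mem_range_succ_iff.mp hi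
          have b1 := hg₁b i hiq z hz
          have b2 := hvb (q - i) (Nat.sub_le q i) z hz
          have hcast : (((q - i : ℕ)) : ℝ) = (q : ℝ) - (i : ℝ) := by
            rw [Nat.cast_sub hiq]
          rw [hcast] at b2
          calc (q.choose i : ℝ) * ‖iteratedFDerivWithin ℝ i g₁ s z‖ *
                ‖iteratedFDerivWithin ℝ (q - i) v s z‖
              ≤ (q.choose i : ℝ) * Mg * (CF * r ^ (β - 1 - ((q:ℝ) - (i:ℝ)))) := by
                gcongr
            _ = (q.choose i : ℝ) * (Mg * CF * r ^ (β - 1 - ((q:ℝ) - (i:ℝ)))) := by ring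
            _ ≤ (q.choose i : ℝ) * (Mg * CF * r ^ e) := by
                refine mul_le_mul_of_nonneg_left ?_ (by positivity)
                refine mul_le_mul_of_nonneg_left ?_ (by positivity)
                exact hmono (by rw [he]; push_cast; linarith)
        have hS0 : (0:ℝ) ≤ ∑ i ∈ Finset.range (q + 1), (q.choose i : ℝ) *
              ‖iteratedFDerivWithin ℝ i g₁ s z‖ * ‖iteratedFDerivWithin ℝ (q - i) v s z‖ :=
          Finset.sum_nonneg fun i _ => by positivity
        have hBn : ‖B‖ ≤ 1 := ContinuousLinearMap.norm_compL_le ℝ E E G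
        refine le_trans (mul_le_mul_of_nonneg_right hBn hS0) ?_
        rw [one_mul]
        refine hsum.trans ?_
        have hfin : ∑ i ∈ Finset.range (q+1), (q.choose i : ℝ) * (Mg * CF * r ^ e)
            = (2^q : ℝ) * (Mg * CF * r ^ e) := by
          rw [← Finset.sum_mul, ← Nat.cast_sum, Nat.sum_range_choose]
          push_cast; ring
        rw [hfin]
        exact le_of_eq (by ring)
      calc ‖iteratedFDerivWithin ℝ q u s z + (iteratedFDerivWithin ℝ q
              (fun w => B (u w) (v w)) s z + iteratedFDerivWithin ℝ q
              (fun w => B (g₁ w) (v w)) s z)‖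
          ≤ ‖iteratedFDerivWithin ℝ q u s z‖ + (‖iteratedFDerivWithin ℝ q
              (fun w => B (u w) (v w)) s z‖ + ‖iteratedFDerivWithin ℝ q
              (fun w => B (g₁ w) (v w)) s z‖) :=
            (norm_add_le _ _).trans (by gcongr; exact norm_add_le _ _)
        _ ≤ C₂ * r ^ e + (2^q * (C₂ * CF) * r ^ e + 2^q * (Mg * CF) * r ^ e) := by
            gcongr
        _ = (C₂ + 2^q * (C₂ * CF) + 2^q * (Mg * CF)) * r ^ e := by ring
    refine ⟨max C₁ (C₂ + 2^q * (C₂ * CF) + 2^q * (Mg * CF)),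
      le_trans hC₁0 (le_max_left _ _), ?_⟩
    intro k hk z hz
    have hρz := hρ z hz
    rcases Nat.lt_succ_iff_lt_or_eq.mp (Nat.lt_succ_of_le hk) with h | h
    · refine (hC₁ k (Nat.lt_succ_iff.mp h) z hz).trans ?_
      exact mul_le_mul_of_nonneg_right (le_max_left _ _)
        (Real.rpow_pos_of_pos hρz.1 _).le
    · subst h
      refine (hmain z hz).trans ?_
      exact mul_le_mul_of_nonneg_right (le_max_right _ _)
        (Real.rpow_pos_of_pos hρz.1 _).le


lemma sector_subset {a b r₁ r₂ r₁' r₂' : ℝ} {n : ℕ} (h₁ : r₁' ≤ r₁) (h₂ : r₂' ≤ r₂) :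
    Sector a b r₁' r₂' n ⊆ Sector a b r₁ r₂ n := by
  rintro z ⟨h0, hz1, hz2, h3⟩
  exact ⟨h0, lt_of_lt_of_le hz1 h₁, lt_of_lt_of_le hz2 h₂, h3⟩

set_option maxHeartbeats 1000000 in
/-- if `f` is `C^∞` on a neighborhood `W` of the origin of `ℂ^{n+1}` and `F` is a
diffeomorphism of order `(β, p)` (`β > 1`, `p ≥ 1`) on `V(a,b,r₁,r₂,n)`, then `f ∘ F − f` is
of order `(β, p)` (on a possibly smaller sector, where both compositions are defined). -/
theorem stmt14 (n m : ℕ) (a b r₁ r₂ β : ℝ) (p : ℕ)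
    (hab : -Real.pi ≤ a) (hab' : a < b) (hb : b ≤ Real.pi)
    (hr₁ : 0 < r₁) (hr₂ : 0 < r₂) (hβ : 1 < β) (hp : 1 ≤ p)
    (W : Set (ℂ × (Fin n → ℂ))) (hW : IsOpen W) (hW0 : (0 : ℂ × (Fin n → ℂ)) ∈ W)
    (f : ℂ × (Fin n → ℂ) → EuclideanSpace ℝ (Fin m)) (hf : ContDiffOn ℝ (⊤ : ℕ∞) f W)
    (F : ℂ × (Fin n → ℂ) → ℂ × (Fin n → ℂ))
    (hF : IsDiffeoOrder (Sector a b r₁ r₂ n) F β p) :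
    ∃ r₁' r₂' : ℝ, 0 < r₁' ∧ r₁' ≤ r₁ ∧ 0 < r₂' ∧ r₂' ≤ r₂ ∧
      (∀ z ∈ Sector a b r₁' r₂' n, z ∈ W ∧ F z ∈ W) ∧
      IsOrderOn (Sector a b r₁' r₂' n) (fun z => f (F z) - f z) β p := by
  obtain ⟨hFsm, hFinj, hFx, hord⟩ := hF
  set V : Set (ℂ × (Fin n → ℂ)) := Sector a b r₁ r₂ n with hVdef
  have hVo : IsOpen V := sector_isOpen a b r₁ r₂ n hb
  -- uniform constants for the order bounds of `F - id`
  have hord' : ∀ k : ℕ, ∃ C ε : ℝ, 0 < ε ∧ (k ≤ p → ∀ z ∈ V, ‖z‖ < ε →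
      ‖z.1‖ ^ ((k : ℝ) - β) * ‖iteratedFDerivWithin ℝ k (fun z => F z - z) V z‖ ≤ C) := by
    intro k
    by_cases hk : k ≤ p
    · obtain ⟨C, ε, hε, h⟩ := hord k hk
      exact ⟨C, ε, hε, fun _ => h⟩
    · exact ⟨0, 1, one_pos, fun h => absurd h hk⟩
  choose Cf εf hεf hbf using hord'
  have hne : (Finset.range (p+1)).Nonempty := Finset.nonempty_range_iff.mpr (Nat.succ_ne_zero p)
  set CF : ℝ := max 0 ((Finset.range (p+1)).sup' hne Cf) with hCFdef
  set εm : ℝ := (Finset.range (p+1)).inf' hne εf with hεmdef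
  have hεm : 0 < εm := (Finset.lt_inf'_iff hne).mpr fun k _ => hεf k
  have hCF0 : 0 ≤ CF := le_max_left 0 _
  have hCFk : ∀ k ≤ p, Cf k ≤ CF := fun k hk =>
    (Finset.le_sup' Cf (Finset.mem_range.mpr (by omega))).trans (le_max_right 0 _)
  have hεk : ∀ k ≤ p, εm ≤ εf k := fun k hk =>
    Finset.inf'_le εf (Finset.mem_range.mpr (by omega))
  -- a ball around the origin inside W
  obtain ⟨δ₀, hδ₀, hδ₀W⟩ := Metric.isOpen_iff.mp hW 0 hW0
  set δ : ℝ := δ₀ / 5 with hδdef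
  have hδ : 0 < δ := by positivity
  have hK : closedBall (0 : ℂ × (Fin n → ℂ)) (2*δ) ⊆ W :=
    (closedBall_subset_ball (by rw [hδdef]; linarith)).trans hδ₀W
  -- the small radius
  set t : ℝ := min (min r₁ r₂) (min (min 1 εm) (δ / (1 + CF))) with htdef
  have ht : 0 < t := by
    have h1 : (0:ℝ) < δ / (1 + CF) := by positivity
    simp only [htdef, lt_min_iff]
    exact ⟨⟨hr₁, hr₂⟩, ⟨one_pos, hεm⟩, h1⟩
  have ht1 : t ≤ 1 := le_trans (min_le_right _ _) (le_trans (min_le_left _ _) (min_le_left _ _))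
  have htε : t ≤ εm := le_trans (min_le_right _ _) (le_trans (min_le_left _ _) (min_le_right _ _))
  have htδ : t ≤ δ / (1 + CF) := le_trans (min_le_right _ _) (min_le_right _ _)
  have htr₁ : t ≤ r₁ := le_trans (min_le_left _ _) (min_le_left _ _)
  have htr₂ : t ≤ r₂ := le_trans (min_le_left _ _) (min_le_right _ _)
  set r' : ℝ := t / 2 with hr'def
  have hr'0 : 0 < r' := by positivity
  set s : Set (ℂ × (Fin n → ℂ)) := Sector a b r' r' n with hsdef
  have hsub : s ⊆ V := sector_subset (by rw [hr'def]; linarith) (by rw [hr'def]; linarith)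
  have hso : IsOpen s := sector_isOpen a b r' r' n hb
  -- basic facts for points of s
  have hzfacts : ∀ z ∈ s, 0 < ‖z.1‖ ∧ ‖z.1‖ < r' ∧ ‖z‖ < r' := by
    rintro z ⟨h0, hz1, hz2, _⟩
    refine ⟨norm_pos_iff.mpr h0, hz1, ?_⟩
    rw [Prod.norm_def]
    exact max_lt hz1 hz2
  have hρ : ∀ z ∈ s, 0 < ‖z.1‖ ∧ ‖z.1‖ ≤ 1 := by
    intro z hz
    obtain ⟨h0, h1, _⟩ := hzfacts z hz
    exact ⟨h0, le_trans h1.le (by rw [hr'def]; linarith)⟩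
  -- the uniform derivative bounds for F - id on s, with full iterated derivatives
  have hFd : ∀ k, k ≤ p → ∀ z ∈ s,
      ‖iteratedFDeriv ℝ k (fun w => F w - w) z‖ ≤ CF * ‖z.1‖ ^ (β - (k : ℝ)) := by
    intro k hk z hz
    obtain ⟨hρ0, hρ1⟩ := hρ z hz
    have hzε : ‖z‖ < εf k := by
      calc ‖z‖ < r' := (hzfacts z hz).2.2
        _ ≤ εm := by rw [hr'def]; linarith
        _ ≤ εf k := hεk k hk
    have hb1 := hbf k hk z (hsub hz) hzε
    have hb2 : ‖z.1‖ ^ ((k:ℝ) - β) * ‖iteratedFDerivWithin ℝ k (fun z => F z - z) V z‖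
        ≤ CF := hb1.trans (hCFk k hk)
    have heq : ‖iteratedFDeriv ℝ k (fun w => F w - w) z‖
        = ‖iteratedFDerivWithin ℝ k (fun z => F z - z) V z‖ := by
      rw [iteratedFDerivWithin_of_isOpen k hVo (hsub hz)]
    rw [heq]
    have h3 := mul_le_mul_of_nonneg_left hb2 (Real.rpow_nonneg hρ0.le (β - (k:ℝ)))
    calc ‖iteratedFDerivWithin ℝ k (fun z => F z - z) V z‖
        = ‖z.1‖ ^ (β - (k:ℝ)) * (‖z.1‖ ^ ((k:ℝ) - β) *
            ‖iteratedFDerivWithin ℝ k (fun z => F z - z) V z‖) := by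
          have h0 : (β - (k:ℝ)) + ((k:ℝ) - β) = 0 := by ring
          rw [← mul_assoc, ← Real.rpow_add hρ0, h0, Real.rpow_zero, one_mul]
      _ ≤ ‖z.1‖ ^ (β - (k:ℝ)) * CF := h3
      _ = CF * ‖z.1‖ ^ (β - (k:ℝ)) := mul_comm _ _
  -- membership bounds
  have hmem : ∀ z ∈ s, ‖z‖ < δ ∧ ‖F z‖ < δ := by
    intro z hz
    obtain ⟨hρ0, hρ1⟩ := hρ z hz
    obtain ⟨_, hz1, hzn⟩ := hzfacts z hz
    have hδCF : (1 + CF) * t ≤ δ := by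
      have h := htδ
      rw [le_div_iff₀ (by positivity : (0:ℝ) < 1 + CF)] at h
      linarith
    have htδ' : t ≤ δ := by nlinarith
    have hzδ : ‖z‖ < δ := by
      have h1 : r' ≤ δ / 2 := by rw [hr'def]; linarith
      linarith
    refine ⟨hzδ, ?_⟩
    have hFz : ‖F z - z‖ ≤ CF * ‖z.1‖ ^ β := by
      have := hFd 0 (Nat.zero_le _) z hz
      simpa [norm_iteratedFDeriv_zero] using this
    have hρβ : ‖z.1‖ ^ β ≤ ‖z.1‖ := by
      calc ‖z.1‖ ^ β ≤ ‖z.1‖ ^ (1:ℝ) :=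
            Real.rpow_le_rpow_of_exponent_ge hρ0 hρ1 hβ.le
        _ = ‖z.1‖ := Real.rpow_one _
    have h5 : ‖F z‖ ≤ ‖z‖ + ‖F z - z‖ := by
      calc ‖F z‖ = ‖z + (F z - z)‖ := by ring_nf
        _ ≤ ‖z‖ + ‖F z - z‖ := norm_add_le _ _
    have h6 : ‖F z - z‖ ≤ CF * r' := by
      refine hFz.trans ?_
      refine mul_le_mul_of_nonneg_left ?_ hCF0
      exact le_trans hρβ hz1.le
    have h7 : (1 + CF) * r' ≤ δ / 2 := by
      rw [hr'def]
      calc (1 + CF) * (t / 2) = ((1 + CF) * t) / 2 := by ring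
        _ ≤ δ / 2 := by linarith
    calc ‖F z‖ ≤ ‖z‖ + ‖F z - z‖ := h5
      _ < r' + CF * r' := by
          have := h6
          linarith
      _ = (1 + CF) * r' := by ring
      _ ≤ δ / 2 := h7
      _ < δ := by linarith
  -- apply the key lemma
  obtain ⟨C, hC0, hCb⟩ := key β hβ.le p s W hso hW (fun z => ‖z.1‖) hρ F (hFsm.mono hsub)
    δ CF hδ hCF0 hK hmem hFd p le_rfl (EuclideanSpace ℝ (Fin m)) f hf
  refine ⟨r', r', hr'0, by rw [hr'def]; linarith, hr'0, by rw [hr'def]; linarith, ?_, ?_⟩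
  · intro z hz
    have h1 := (hmem z hz).1
    have h2 := (hmem z hz).2
    constructor
    · exact hK (by simp only [mem_closedBall_zero_iff]; linarith)
    · exact hK (by simp only [mem_closedBall_zero_iff]; linarith)
  · intro k hk
    refine ⟨C, 1, one_pos, ?_⟩
    intro z hz _
    obtain ⟨hρ0, hρ1⟩ := hρ z hz
    have heq : ‖iteratedFDerivWithin ℝ k (fun z => f (F z) - f z) s z‖
        = ‖iteratedFDeriv ℝ k (fun w => f (F w) - f w) z‖ := by
      rw [iteratedFDerivWithin_of_isOpen k hso hz]
    rw [heq]
    have h1 := hCb k hk z hz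
    have h2 := mul_le_mul_of_nonneg_left h1 (Real.rpow_nonneg hρ0.le ((k:ℝ) - β))
    calc ‖z.1‖ ^ ((k:ℝ) - β) * ‖iteratedFDeriv ℝ k (fun w => f (F w) - f w) z‖
        ≤ ‖z.1‖ ^ ((k:ℝ) - β) * (C * ‖z.1‖ ^ (β - (k:ℝ))) := h2
      _ = C * (‖z.1‖ ^ ((k:ℝ) - β) * ‖z.1‖ ^ (β - (k:ℝ))) := by ring
      _ = C := by
          have h0 : ((k:ℝ) - β) + (β - (k:ℝ)) = 0 := by ring
          rw [← Real.rpow_add hρ0, h0, Real.rpow_zero, mul_one]
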